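/- arXiv:1210.8231 — 4 statements merged into one kernel-verified Lean document; each statement's English description precedes it below -/
import Mathlib

section
/- A positive integer n is a congruent number (i.e., the area of a right triangle with rational side lengths) if and only if there exists a rational point (x, y) with y ≠ 0 on the elliptic curve n·y² = x³ − x. -/
/-!
A right triangle with legs `a, b`, hypotenuse `c` and area `n` gives the point
`x = (a + c) / b`, `y = 2 (a + c) / b²` on `n y² = x³ - x`. Conversely, a point with `y ≠ 0`
gives the triangle with sides `(x² - 1) / y`, `2x / y`, `(x² + 1) / y` (Euclid's
parametrisation of Pythagorean triples), whose legs have product `2n`; taking absolute values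
makes the sides positive.
-/

/-- A positive integer `n` is a *congruent number* if it is the area of a right triangle
with rational side lengths. -/
def IsCongruentNumber (n : ℕ) : Prop :=
  ∃ a b c : ℚ, 0 < a ∧ 0 < b ∧ 0 < c ∧ a ^ 2 + b ^ 2 = c ^ 2 ∧ a * b / 2 = n

section Field

variable {K : Type*} [Field K]

theorem curve_eq_of_sq_add_sq {a b c n : K} (hb : b ≠ 0) (hpy : a ^ 2 + b ^ 2 = c ^ 2)
    (harea : a * b = 2 * n) :
    n * (2 * (a + c) / b ^ 2) ^ 2 = ((a + c) / b) ^ 3 - (a + c) / b := by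
  field_simp
  linear_combination (-2 * (a + c) ^ 2) * harea + (a + c) * b * hpy

theorem div_sq_add_div_sq_eq_div_sq (x y : K) :
    ((x ^ 2 - 1) / y) ^ 2 + (2 * x / y) ^ 2 = ((x ^ 2 + 1) / y) ^ 2 := by
  rw [div_pow, div_pow, div_pow, ← add_div]
  ring

theorem mul_eq_two_mul_of_curve_eq {x y n : K} (hy : y ≠ 0) (h : n * y ^ 2 = x ^ 3 - x) :
    (x ^ 2 - 1) / y * (2 * x / y) = 2 * n := by
  field_simp
  linear_combination (-2) * h

end Field

theorem isCongruentNumber_of_sq_add_sq {n : ℕ} (hn : 0 < n) {a b c : ℚ}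
    (hpy : a ^ 2 + b ^ 2 = c ^ 2) (harea : a * b = 2 * n) : IsCongruentNumber n := by
  have hab : a * b ≠ 0 := by rw [harea]; positivity
  obtain ⟨ha, hb⟩ := mul_ne_zero_iff.mp hab
  have hc : c ≠ 0 := by
    rintro rfl
    nlinarith [sq_pos_of_ne_zero ha, sq_nonneg b]
  refine ⟨|a|, |b|, |c|, abs_pos.mpr ha, abs_pos.mpr hb, abs_pos.mpr hc, ?_, ?_⟩
  · simpa only [sq_abs] using hpy
  · rw [← abs_mul, harea, abs_of_pos (by positivity)]
    ring

/-- `n > 0` is congruent iff there is a rational point `(x, y)` with `y ≠ 0`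
on the elliptic curve `n·y² = x³ − x`. -/
theorem congruent_iff_rational_point (n : ℕ) (hn : 0 < n) :
    IsCongruentNumber n ↔ ∃ x y : ℚ, y ≠ 0 ∧ (n : ℚ) * y ^ 2 = x ^ 3 - x := by
  constructor
  · rintro ⟨a, b, c, ha, hb, hc, hpy, harea⟩
    exact ⟨(a + c) / b, 2 * (a + c) / b ^ 2, by positivity,
      curve_eq_of_sq_add_sq hb.ne' hpy (by linarith)⟩
  · rintro ⟨x, y, hy, h⟩
    exact isCongruentNumber_of_sq_add_sq hn (div_sq_add_div_sq_eq_div_sq x y)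
      (mul_eq_two_mul_of_curve_eq hy h)
end

section
/- The torsion subgroup of E(ℚ(√m))⁻ is exactly E[2], the 2-torsion subgroup of E, for any square-free integer m with m ≠ 0, 1. -/
/-!
A point of `E(K)⁻` has a `σ`-fixed, hence rational, `x`-coordinate. For `P = (x, y)`
with `y ≠ 0` the duplication formula reads `x(2P) = (x² + 1)² / (4(x³ - x))`, and for
rational `x` with `x³ ≠ x` a `2`-adic computation gives `v₂(x(2P)) < min(0, v₂(x))`.
Hence if `P ∈ E(K)⁻` and `2P ≠ 0`, the valuations `v₂(x(2ʲP))` strictly decrease, so the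
points `2ʲP` are pairwise distinct and `P` has infinite order.
-/

open WeierstrassCurve WeierstrassCurve.Affine

/-- The elliptic curve `E : y² = x³ − x` over `ℚ`. -/
def E : WeierstrassCurve.Affine ℚ := ⟨0, 0, 0, -1, 0⟩

open Classical in
/-- The subgroup `E(K)⁻` of points of `E` over `K` sent to their negatives by `σ`. -/
noncomputable def minusSubgroup (K : Type) [Field K] [Algebra ℚ K] (σ : K ≃ₐ[ℚ] K) :
    AddSubgroup (E⁄K).Point :=
  (Affine.Point.map (W' := E) σ.toAlgHom + AddMonoidHom.id (E⁄K).Point).ker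

namespace padicValRat

variable {p : ℕ} [Fact p.Prime]

lemma add_eq_min_of_ne {q r : ℚ} (hq : q ≠ 0) (hr : r ≠ 0)
    (hval : padicValRat p q ≠ padicValRat p r) :
    padicValRat p (q + r) = min (padicValRat p q) (padicValRat p r) := by
  refine add_eq_min (p := p) (fun hqr => hval ?_) hq hr hval
  rw [eq_neg_of_add_eq_zero_right hqr, padicValRat.neg]

lemma cube_sub_self_ne_zero_of_neg {q : ℚ} (hq : padicValRat p q < 0) : q ^ 3 - q ≠ 0 := by
  have hq0 : q ≠ 0 := by rintro rfl; simp at hq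
  have hq1 : q ^ 2 ≠ 1 := fun h => by
    have := padicValRat.pow (p := p) q (k := 2)
    rw [h, padicValRat.one] at this
    omega
  rw [show q ^ 3 - q = q * (q ^ 2 - 1) by ring]
  exact mul_ne_zero hq0 (sub_ne_zero.2 hq1)

end padicValRat

lemma Rat.odd_num_den_of_padicValRat_two_eq_zero {q : ℚ} (hq0 : q ≠ 0)
    (hq : padicValRat 2 q = 0) : Odd q.num ∧ Odd q.den := by
  rw [padicValRat_def] at hq
  have hnum : q.num ≠ 0 := Rat.num_ne_zero.2 hq0
  by_cases h2 : (2 : ℤ) ∣ q.num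
  · have hden : ¬ 2 ∣ q.den := fun hd =>
      Nat.not_coprime_of_dvd_of_dvd one_lt_two (Int.natAbs_dvd_natAbs.2 h2) hd q.reduced
    have := one_le_padicValNat_of_dvd (p := 2) (Int.natAbs_ne_zero.2 hnum)
      (Int.natAbs_dvd_natAbs.2 h2)
    rw [padicValNat.eq_zero_of_not_dvd hden] at hq
    simp only [padicValInt] at hq
    omega
  · rw [padicValInt.eq_zero_of_not_dvd h2] at hq
    refine ⟨Int.not_even_iff_odd.1 (even_iff_two_dvd.not.2 h2), Nat.odd_iff.2 ?_⟩
    by_contra hd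
    have := one_le_padicValNat_of_dvd q.den_nz (by omega : 2 ∣ q.den)
    omega

lemma three_le_padicValRat_two_sq_sub_one {q : ℚ} (hq0 : q ≠ 0) (hq : padicValRat 2 q = 0)
    (h : q ^ 2 - 1 ≠ 0) : 3 ≤ padicValRat 2 (q ^ 2 - 1) := by
  obtain ⟨hnum, hden⟩ := Rat.odd_num_den_of_padicValRat_two_eq_zero hq0 hq
  set N : ℤ := q.num ^ 2 - (q.den : ℤ) ^ 2
  have hden0 : q.den ^ 2 ≠ 0 := by positivity
  have hsq : q ^ 2 - 1 = (N : ℚ) / ((q.den ^ 2 : ℕ) : ℚ) := by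
    rw [eq_div_iff (by exact_mod_cast hden0)]
    nth_rw 1 [← Rat.num_div_den q]
    push_cast [N]
    field_simp
  have hN : N ≠ 0 := by
    rintro hN; rw [hN] at hsq; simp [hsq] at h
  have h8 : (2 : ℤ) ^ 3 ∣ N := by
    have := (Int.eight_dvd_sq_sub_one_of_odd hnum).sub
      (Int.eight_dvd_sq_sub_one_of_odd (hden.natCast (R := ℤ)))
    rwa [sub_sub_sub_cancel_right] at this
  have hden2 : ¬ 2 ∣ q.den ^ 2 := fun hd => by
    have := Nat.odd_iff.1 (hden.pow (n := 2)); omega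
  rw [hsq, padicValRat.div (by exact_mod_cast hN) (by exact_mod_cast hden0), padicValRat.of_int,
    padicValRat.of_nat, padicValNat.eq_zero_of_not_dvd hden2]
  have := ((padicValInt_dvd_iff (p := 2) 3 N).1 (by exact_mod_cast h8)).resolve_left hN
  omega

def doubleX {F : Type*} [Field F] (x : F) : F := (x ^ 2 + 1) ^ 2 / (4 * (x ^ 3 - x))

lemma map_doubleX {F G : Type*} [Field F] [Field G] (f : F →+* G) (x : F) :
    f (doubleX x) = doubleX (f x) := by
  simp [doubleX, map_div₀, map_ofNat]

lemma padicValRat_two_doubleX_lt {q : ℚ} (hq : q ^ 3 - q ≠ 0) :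
    padicValRat 2 (doubleX q) < min 0 (padicValRat 2 q) := by
  have hq0 : q ≠ 0 := by rintro rfl; simp at hq
  have hq1 : q ^ 2 - 1 ≠ 0 := fun h => hq (by linear_combination q * h)
  have hsq : padicValRat 2 (q ^ 2) = 2 * padicValRat 2 q := padicValRat.pow q
  have htwo : padicValRat 2 2 = 1 := padicValRat.self one_lt_two
  have hval : padicValRat 2 (doubleX q) = 2 * padicValRat 2 (q ^ 2 + 1) - 2
      - padicValRat 2 q - padicValRat 2 (q ^ 2 - 1) := by
    rw [doubleX, show 4 * (q ^ 3 - q) = 2 ^ 2 * (q * (q ^ 2 - 1)) by ring,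
      padicValRat.div (by positivity) (by simp [hq0, hq1]), padicValRat.pow,
      padicValRat.mul (by norm_num) (mul_ne_zero hq0 hq1), padicValRat.mul hq0 hq1,
      padicValRat.pow, htwo]
    push_cast; ring
  rcases eq_or_ne (padicValRat 2 q) 0 with h0 | h0
  · have h3 := three_le_padicValRat_two_sq_sub_one hq0 h0 hq1
    have h1 : padicValRat 2 (q ^ 2 + 1) = 1 := by
      rw [show q ^ 2 + 1 = (q ^ 2 - 1) + 2 by ring,
        padicValRat.add_eq_min_of_ne hq1 two_ne_zero (by omega), htwo]
      omega
    omega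
  · have hq2 : q ^ 2 ≠ 0 := pow_ne_zero 2 hq0
    have hplus : padicValRat 2 (q ^ 2 + 1) = min (2 * padicValRat 2 q) 0 := by
      rw [padicValRat.add_eq_min_of_ne hq2 one_ne_zero (by rw [hsq, padicValRat.one]; omega),
        hsq, padicValRat.one]
    have hminus : padicValRat 2 (q ^ 2 - 1) = min (2 * padicValRat 2 q) 0 := by
      rw [sub_eq_add_neg, padicValRat.add_eq_min_of_ne hq2 (neg_ne_zero.2 one_ne_zero)
        (by rw [hsq, padicValRat.neg, padicValRat.one]; omega), hsq, padicValRat.neg,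
        padicValRat.one]
    omega

lemma doubleX_iterate_cube_sub_self_ne_zero {q : ℚ} (hq : q ^ 3 - q ≠ 0) :
    ∀ j : ℕ, (doubleX^[j] q) ^ 3 - doubleX^[j] q ≠ 0
  | 0 => hq
  | j + 1 => by
    rw [Function.iterate_succ_apply']
    exact padicValRat.cube_sub_self_ne_zero_of_neg (p := 2)
      ((padicValRat_two_doubleX_lt (doubleX_iterate_cube_sub_self_ne_zero hq j)).trans_le
        (min_le_left _ _))

lemma doubleX_iterate_injective {q : ℚ} (hq : q ^ 3 - q ≠ 0) :
    Function.Injective fun j : ℕ => doubleX^[j] q := by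
  have : StrictAnti fun j : ℕ => padicValRat 2 (doubleX^[j] q) := by
    refine strictAnti_nat_of_succ_lt fun j => ?_
    rw [Function.iterate_succ_apply']
    exact (padicValRat_two_doubleX_lt (doubleX_iterate_cube_sub_self_ne_zero hq j)).trans_le
      (min_le_right _ _)
  exact Function.Injective.of_comp (f := padicValRat 2) this.injective

section Curve

variable {K : Type} [Field K] [Algebra ℚ K]

lemma E_baseChange : (E⁄K) = (⟨0, 0, 0, -1, 0⟩ : WeierstrassCurve K) := by
  simp only [E, WeierstrassCurve.baseChange, WeierstrassCurve.map, map_zero, map_neg, map_one]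

lemma E_baseChange_equation_iff {x y : K} : (E⁄K).Equation x y ↔ y ^ 2 = x ^ 3 - x := by
  rw [E_baseChange, equation_iff]
  constructor <;> intro h <;> linear_combination h

lemma E_baseChange_negY (x y : K) : (E⁄K).negY x y = -y := by
  rw [E_baseChange, negY]; ring

variable [DecidableEq K]

lemma two_nsmul_some_eq_zero_iff {x y : K} (h : (E⁄K).Nonsingular x y) :
    2 • Point.some x y h = 0 ↔ y = 0 := by
  have : CharZero K := charZero_of_injective_algebraMap (algebraMap ℚ K).injective
  rw [two_nsmul]
  constructor
  · intro h2
    by_contra hy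
    refine Point.some_ne_zero _ ((Point.add_self_of_Y_ne ?_).symm.trans h2)
    rw [E_baseChange_negY]
    exact fun h' => hy (by linear_combination h' / 2)
  · intro hy
    exact Point.add_self_of_Y_eq (by rw [E_baseChange_negY, hy, neg_zero])

lemma exists_two_nsmul_some_eq {x y : K} (h : (E⁄K).Nonsingular x y) (hx : x ^ 3 - x ≠ 0) :
    ∃ y' h', 2 • Point.some x y h = Point.some (doubleX x) y' h' := by
  have : CharZero K := charZero_of_injective_algebraMap (algebraMap ℚ K).injective
  have hy2 : y ^ 2 = x ^ 3 - x := E_baseChange_equation_iff.1 h.1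
  have hy : y ≠ 0 := by rintro rfl; exact hx (by simpa using hy2.symm)
  have hyne : y ≠ (E⁄K).negY x y := by
    rw [E_baseChange_negY]; exact fun h' => hy (by linear_combination h' / 2)
  have hX : (E⁄K).addX x x ((E⁄K).slope x x y y) = doubleX x := by
    rw [slope_of_Y_ne rfl hyne, E_baseChange_negY, E_baseChange, addX, doubleX, ← hy2]
    field_simp
    linear_combination (-32 * x) * hy2
  rw [two_nsmul, Point.add_self_of_Y_ne hyne]
  exact ⟨_, hX ▸ nonsingular_add h h fun hxy => hyne hxy.2, by simp only [hX]⟩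

lemma not_isOfFinAddOrder_some_of_rat {q : ℚ} {y : K}
    (h : (E⁄K).Nonsingular (algebraMap ℚ K q) y) (hq : q ^ 3 - q ≠ 0) :
    ¬ IsOfFinAddOrder (Point.some _ _ h) := by
  set P := Point.some _ _ h
  have hpow (j : ℕ) :
      ∃ y' h', 2 ^ j • P = Point.some (algebraMap ℚ K (doubleX^[j] q)) y' h' := by
    induction j with
    | zero => exact ⟨y, h, one_nsmul P⟩
    | succ j ih =>
      obtain ⟨y', h', hj⟩ := ih
      have hcube := (map_ne_zero (algebraMap ℚ K)).2 (doubleX_iterate_cube_sub_self_ne_zero hq j)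
      rw [map_sub, map_pow] at hcube
      obtain ⟨y'', h'', h2⟩ := exists_two_nsmul_some_eq h' hcube
      rw [Function.iterate_succ_apply', map_doubleX]
      exact ⟨y'', h'', by rw [pow_succ, mul_nsmul, hj, h2]⟩
  have hinj : Function.Injective fun j : ℕ => 2 ^ j • P := by
    intro a b hab
    obtain ⟨ya, ha, hPa⟩ := hpow a
    obtain ⟨yb, hb, hPb⟩ := hpow b
    have hx := (Point.some.inj (hPa.symm.trans (hab.trans hPb))).1
    exact doubleX_iterate_injective hq ((algebraMap ℚ K).injective hx)
  intro hfin
  refine Set.infinite_range_of_injective hinj (hfin.finite_multiples.subset ?_)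
  rintro _ ⟨j, rfl⟩
  exact ⟨2 ^ j, rfl⟩

end Curve

section QuadraticField

variable {K : Type} [Field K] [Algebra ℚ K] {c : ℚ} {s : K}

lemma exists_eq_add_mul_of_adjoin_eq_top (hs : s ^ 2 = algebraMap ℚ K c)
    (hK : Algebra.adjoin ℚ {s} = ⊤) (z : K) :
    ∃ a b : ℚ, z = algebraMap ℚ K a + algebraMap ℚ K b * s := by
  have hz : z ∈ Algebra.adjoin ℚ {s} := hK ▸ Algebra.mem_top
  induction hz using Algebra.adjoin_induction with
  | mem x hx =>
    rw [Set.mem_singleton_iff.1 hx]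
    exact ⟨0, 1, by simp⟩
  | algebraMap a => exact ⟨a, 0, by simp⟩
  | add u v _ _ ihu ihv =>
    obtain ⟨a, b, rfl⟩ := ihu
    obtain ⟨a', b', rfl⟩ := ihv
    exact ⟨a + a', b + b', by push_cast; ring⟩
  | mul u v _ _ ihu ihv =>
    obtain ⟨a, b, rfl⟩ := ihu
    obtain ⟨a', b', rfl⟩ := ihv
    refine ⟨a * a' + b * b' * c, a * b' + b * a', ?_⟩
    simp only [map_add, map_mul]
    linear_combination (algebraMap ℚ K b * algebraMap ℚ K b') * hs

lemma mem_range_algebraMap_of_fixed (hs : s ^ 2 = algebraMap ℚ K c)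
    (hK : Algebra.adjoin ℚ {s} = ⊤) {σ : K ≃ₐ[ℚ] K} (hσ : σ s = -s) {z : K}
    (hz : σ z = z) : z ∈ Set.range (algebraMap ℚ K) := by
  have : CharZero K := charZero_of_injective_algebraMap (algebraMap ℚ K).injective
  obtain ⟨a, b, rfl⟩ := exists_eq_add_mul_of_adjoin_eq_top hs hK z
  rw [map_add, map_mul, AlgEquiv.commutes, AlgEquiv.commutes, hσ] at hz
  have hbs : algebraMap ℚ K b * s = 0 :=
    (mul_eq_zero.1 (by linear_combination -hz : (2 : K) * _ = 0)).resolve_left two_ne_zero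
  exact ⟨a, by rw [hbs, add_zero]⟩

end QuadraticField

section MinusSubgroup

open Classical

variable {K : Type} [Field K] [Algebra ℚ K] {σ : K ≃ₐ[ℚ] K}

lemma mem_minusSubgroup_iff {P : (E⁄K).Point} :
    P ∈ minusSubgroup K σ ↔ Point.map σ.toAlgHom P = -P := by
  rw [minusSubgroup, AddMonoidHom.mem_ker, AddMonoidHom.add_apply, AddMonoidHom.id_apply,
    add_eq_zero_iff_eq_neg]

lemma apply_eq_of_some_mem_minusSubgroup {x y : K} {h : (E⁄K).Nonsingular x y}
    (hP : Point.some x y h ∈ minusSubgroup K σ) : σ x = x := by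
  rw [mem_minusSubgroup_iff, Point.map_some, Point.neg_some] at hP
  exact (Point.some.inj hP).1

lemma mem_minusSubgroup_of_two_nsmul_eq_zero {P : (E⁄K).Point} (h2 : 2 • P = 0) :
    P ∈ minusSubgroup K σ := by
  rcases P with _ | ⟨x, y, h⟩
  · exact zero_mem _
  have hy : y = 0 := (two_nsmul_some_eq_zero_iff h).1 h2
  have hx : x * (x - 1) * (x + 1) = 0 := by
    have hxy := E_baseChange_equation_iff.1 h.1
    rw [hy] at hxy
    linear_combination -hxy
  rw [mem_minusSubgroup_iff, Point.map_some, Point.neg_some]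
  simp only [Point.some.injEq, E_baseChange_negY, hy, map_zero, neg_zero, and_true]
  rcases mul_eq_zero.1 hx with hx | hx
  · rcases mul_eq_zero.1 hx with hx | hx
    · simp [hx]
    · simp [sub_eq_zero.1 hx]
  · simp [eq_neg_of_add_eq_zero_left hx]

end MinusSubgroup

open Classical in
theorem torsion_of_minus_part_eq_two_torsion_general (m : ℤ)
    (K : Type) [Field K] [Algebra ℚ K]
    (sm : K) (hsm : sm ^ 2 = (m : K)) (hK : Algebra.adjoin ℚ {sm} = ⊤)
    (σ : K ≃ₐ[ℚ] K) (hσ : σ sm = -sm) :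
    {P : (E⁄K).Point | P ∈ minusSubgroup K σ ∧ IsOfFinAddOrder P} = {P : (E⁄K).Point | 2 • P = 0} := by
  ext P
  refine ⟨fun ⟨hP, hfin⟩ => ?_, fun h2 => ⟨mem_minusSubgroup_of_two_nsmul_eq_zero h2,
    isOfFinAddOrder_iff_nsmul_eq_zero.2 ⟨2, two_pos, h2⟩⟩⟩
  by_contra h2
  rcases P with _ | ⟨x, y, h⟩
  · exact h2 (nsmul_zero 2)
  have hsq : sm ^ 2 = algebraMap ℚ K m := by rw [hsm, map_intCast]
  obtain ⟨q, rfl⟩ :=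
    mem_range_algebraMap_of_fixed hsq hK hσ (apply_eq_of_some_mem_minusSubgroup hP)
  refine not_isOfFinAddOrder_some_of_rat h
    (fun hq => h2 <| (two_nsmul_some_eq_zero_iff h).2 ?_) hfin
  rw [← pow_eq_zero_iff two_ne_zero, E_baseChange_equation_iff.1 h.1, ← map_pow, ← map_sub,
    hq, map_zero]

open Classical in
/-- for a square-free integer `m ≠ 0, 1`, the torsion subgroup of
`E(ℚ(√m))⁻` is exactly the `2`-torsion `E[2]`. -/
theorem torsion_of_minus_part_eq_two_torsion (m : ℤ) (hm0 : m ≠ 0) (hm1 : m ≠ 1)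
    (hm : Squarefree m)
    (K : Type) [Field K] [Algebra ℚ K]
    (sm : K) (hsm : sm ^ 2 = (m : K)) (hK : Algebra.adjoin ℚ {sm} = ⊤)
    (hsm' : sm ∉ Set.range (algebraMap ℚ K))
    (σ : K ≃ₐ[ℚ] K) (hσ : σ sm = -sm) :
    {P : (E⁄K).Point | P ∈ minusSubgroup K σ ∧ IsOfFinAddOrder P} = {P : (E⁄K).Point | 2 • P = 0} :=
  torsion_of_minus_part_eq_two_torsion_general m K sm hsm hK σ hσ
end

section
/- The Mordell–Weil group E'(ℚ) of the elliptic curve E': y² = x³ + 4x has rank 0, and its torsion subgroup is cyclic of order 4, generated by (2, 4). -/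
open WeierstrassCurve WeierstrassCurve.Affine

/-- The elliptic curve `E' : y² = x³ + 4x` over `ℚ`. -/
def E' : WeierstrassCurve.Affine ℚ := ⟨0, 0, 0, 4, 0⟩

lemma nonsingular_two_four : E'.Nonsingular 2 4 := by
  rw [nonsingular_iff, equation_iff]; norm_num [E']

def P24 : E'.Point := .some _ _ nonsingular_two_four

/-!
If `(x, y)` is a rational point of `y² = x³ + 4x` with `x ≠ 0`, then `(y / x)² = x + 4 / x`, so
`(y / x)⁴ - 2⁴ = (x - 4 / x)²`. By Fermat's right-triangle theorem (`a⁴ - b⁴ = c²` forces `b = 0`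
or `c = 0`) this gives `x² = 4`, hence `(x, y) = (2, ±4)`. Thus `E'(ℚ) = {O, (0, 0), (2, ±4)}`,
and `2 • (2, 4) = (0, 0)` is the point of order two.

Fermat's theorem is proved by descent on primitive solutions: `(b², c, a²)` is a primitive
Pythagorean triple. If `b` is odd, its parametrisation `b² = m² - n²`, `a² = m² + n²` gives the
smaller solution `m⁴ - n⁴ = (ab)²`. If `c` is odd, it gives `a² = e⁴ + 4d⁴`, and parametrising the
triple `(e², 2d², a)` in turn gives `r⁴ - t⁴ = e²` with `r⁴ < |a|`.
-/

namespace Int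

lemma exists_eq_sq_of_isCoprime_of_mul_eq_sq {a b c : ℤ} (hab : IsCoprime a b) (ha : 0 ≤ a)
    (h : a * b = c ^ 2) : ∃ d, a = d ^ 2 := by
  obtain ⟨d, hd | hd⟩ := Int.sq_of_isCoprime hab h
  · exact ⟨d, hd⟩
  · exact ⟨0, by nlinarith [sq_nonneg d]⟩

lemma exists_eq_two_mul_sq_and_eq_sq {m n b : ℤ} (hmn : IsCoprime m n) (hm : 0 ≤ m) (hn : 0 ≤ n)
    (hm2 : Even m) (h : b ^ 2 = 2 * m * n) : ∃ d e, m = 2 * d ^ 2 ∧ n = e ^ 2 := by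
  obtain ⟨u, rfl⟩ := hm2
  have hb : Even b := (Int.even_pow' two_ne_zero).mp ⟨u * n * 2, by rw [h]; ring⟩
  obtain ⟨β, rfl⟩ := hb
  have hun : u * n = β ^ 2 := by linarith
  have hcop : IsCoprime u n := by rw [← two_mul] at hmn; exact hmn.of_mul_left_right
  obtain ⟨d, rfl⟩ := exists_eq_sq_of_isCoprime_of_mul_eq_sq hcop (by linarith) hun
  obtain ⟨e, rfl⟩ := exists_eq_sq_of_isCoprime_of_mul_eq_sq hcop.symm hn (by rw [mul_comm, hun])
  exact ⟨d, e, by ring, rfl⟩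

lemma isCoprime_and_odd_of_isCoprime_two_mul_sq {d e : ℤ} (h : IsCoprime (2 * d ^ 2) (e ^ 2)) :
    IsCoprime d e ∧ Odd e :=
  ⟨(IsCoprime.pow_left_iff two_pos).mp ((IsCoprime.pow_right_iff two_pos).mp h.of_mul_left_right),
    (Int.odd_pow' two_ne_zero).mp (Int.isCoprime_two_left.mp h.of_mul_left_left)⟩

end Int

def PrimitiveQuarticDiffSq (a b c : ℤ) : Prop :=
  IsCoprime a b ∧ b ≠ 0 ∧ c ≠ 0 ∧ a ^ 4 - b ^ 4 = c ^ 2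

lemma exists_primitiveQuarticDiffSq_of_sq_eq {a d e : ℤ} (hde : IsCoprime d e) (he : Odd e)
    (hd : d ≠ 0) (h : a ^ 2 = e ^ 4 + 4 * d ^ 4) :
    ∃ r t, PrimitiveQuarticDiffSq r t e ∧ r.natAbs < a.natAbs := by
  have ha : 0 < |a| := by
    rw [abs_pos]; rintro rfl
    have : 0 < e ^ 4 + 4 * d ^ 4 := by positivity
    linarith
  have htriple : PythagoreanTriple (e ^ 2) (2 * d ^ 2) |a| := by
    rw [PythagoreanTriple, abs_mul_abs_self]; linear_combination -h
  have hcop : IsCoprime (e ^ 2) (2 * d ^ 2) :=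
    (Int.isCoprime_two_right.mpr he.pow).mul_right hde.symm.pow
  obtain ⟨m, n, he2, hd2, ha', hmn, -, hm⟩ := PythagoreanTriple.coprime_classification' htriple
    (Int.isCoprime_iff_gcd_eq_one.mp hcop) (Int.odd_iff.mp he.pow) ha
  have hmn : IsCoprime m n := Int.isCoprime_iff_gcd_eq_one.mpr hmn
  have hdmn : m * n = d ^ 2 := by linarith
  have hn : 0 < n := pos_of_mul_pos_right (hdmn ▸ by positivity) hm
  obtain ⟨r, rfl⟩ := Int.exists_eq_sq_of_isCoprime_of_mul_eq_sq hmn hm hdmn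
  obtain ⟨t, rfl⟩ := Int.exists_eq_sq_of_isCoprime_of_mul_eq_sq hmn.symm hn.le
    (by rw [mul_comm, hdmn])
  refine ⟨r, t, ⟨?_, ?_, ?_, by linear_combination -he2⟩, ?_⟩
  · exact (IsCoprime.pow_left_iff two_pos).mp ((IsCoprime.pow_right_iff two_pos).mp hmn)
  · rintro rfl; simp at hn
  · rintro rfl; exact Int.not_odd_zero he
  · rw [Int.natAbs_lt_iff_sq_lt]
    calc r ^ 2 ≤ (r ^ 2) ^ 2 := Int.le_self_sq _
      _ < |a| := by rw [ha']; exact lt_add_of_pos_right _ (pow_pos hn 2)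
      _ ≤ |a| ^ 2 := Int.le_self_sq _
      _ = a ^ 2 := sq_abs a

namespace PrimitiveQuarticDiffSq

variable {a b c : ℤ}

lemma sq_pos (h : PrimitiveQuarticDiffSq a b c) : 0 < a ^ 2 := by
  obtain ⟨-, hb, -, h⟩ := h
  have : 0 < b ^ 4 + c ^ 2 := by positivity
  nlinarith

lemma isCoprime_sq_left (h : PrimitiveQuarticDiffSq a b c) : IsCoprime (b ^ 2) c := by
  obtain ⟨hab, -, -, h⟩ := h
  have hba : IsCoprime b (c ^ 2 + b * b ^ 3) := by
    rw [show c ^ 2 + b * b ^ 3 = a ^ 4 by linear_combination -h]; exact hab.symm.pow_right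
  exact ((IsCoprime.pow_right_iff two_pos).mp hba.of_add_mul_left_right).pow_left

lemma exists_natAbs_lt_of_odd_left (h : PrimitiveQuarticDiffSq a b c) (hb : Odd b) :
    ∃ a' b' c', PrimitiveQuarticDiffSq a' b' c' ∧ a'.natAbs < a.natAbs := by
  have ⟨_, hb0, hc0, habc⟩ := h
  have htriple : PythagoreanTriple (b ^ 2) c (a ^ 2) := by
    rw [PythagoreanTriple]; linear_combination -habc
  obtain ⟨m, n, hb2, hc, ha2, hmn, -, -⟩ := PythagoreanTriple.coprime_classification' htriple
    (Int.isCoprime_iff_gcd_eq_one.mp h.isCoprime_sq_left) (Int.odd_iff.mp hb.pow) h.sq_pos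
  have hn : n ≠ 0 := by rintro rfl; exact hc0 (by simpa using hc)
  refine ⟨m, n, a * b, ⟨Int.isCoprime_iff_gcd_eq_one.mpr hmn, hn, ?_, ?_⟩, ?_⟩
  · exact mul_ne_zero (pow_ne_zero_iff two_ne_zero |>.mp h.sq_pos.ne') hb0
  · linear_combination (-a ^ 2) * hb2 + (-(m ^ 2 - n ^ 2)) * ha2
  · rw [Int.natAbs_lt_iff_sq_lt, ha2]
    exact lt_add_of_pos_right _ (by positivity)

lemma exists_natAbs_lt_of_odd_right (h : PrimitiveQuarticDiffSq a b c) (hc : Odd c) :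
    ∃ a' b' c', PrimitiveQuarticDiffSq a' b' c' ∧ a'.natAbs < a.natAbs := by
  have ⟨_, hb0, _, habc⟩ := h
  have htriple : PythagoreanTriple c (b ^ 2) (a ^ 2) := by
    rw [PythagoreanTriple]; linear_combination -habc
  obtain ⟨m, n, -, hb2, ha2, hmn, hpar, hm⟩ := PythagoreanTriple.coprime_classification' htriple
    (Int.isCoprime_iff_gcd_eq_one.mp h.isCoprime_sq_left.symm) (Int.odd_iff.mp hc) h.sq_pos
  have hmn : IsCoprime m n := Int.isCoprime_iff_gcd_eq_one.mpr hmn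
  have hmn_pos : 0 < m * n := by
    have : 0 < b ^ 2 := by positivity
    linarith
  have hn : 0 ≤ n := (pos_of_mul_pos_right hmn_pos hm).le
  obtain ⟨d, e, hde, he, hd, hsq⟩ :
      ∃ d e, IsCoprime d e ∧ Odd e ∧ d ≠ 0 ∧ a ^ 2 = e ^ 4 + 4 * d ^ 4 := by
    rcases hpar with ⟨hm2, -⟩ | ⟨-, hn2⟩
    · obtain ⟨d, e, rfl, rfl⟩ :=
        Int.exists_eq_two_mul_sq_and_eq_sq hmn hm hn (Int.even_iff.mpr hm2) hb2
      obtain ⟨hde, he⟩ := Int.isCoprime_and_odd_of_isCoprime_two_mul_sq hmn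
      refine ⟨d, e, hde, he, ?_, by rw [ha2]; ring⟩
      rintro rfl; simp at hmn_pos
    · obtain ⟨d, e, rfl, rfl⟩ :=
        Int.exists_eq_two_mul_sq_and_eq_sq hmn.symm hn hm (Int.even_iff.mpr hn2)
          (by rw [hb2]; ring)
      obtain ⟨hde, he⟩ := Int.isCoprime_and_odd_of_isCoprime_two_mul_sq hmn.symm
      refine ⟨d, e, hde, he, ?_, by rw [ha2]; ring⟩
      rintro rfl; simp at hmn_pos
  obtain ⟨r, t, hrt, hlt⟩ := exists_primitiveQuarticDiffSq_of_sq_eq hde he hd hsq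
  exact ⟨r, t, e, hrt, hlt⟩

lemma exists_natAbs_lt (h : PrimitiveQuarticDiffSq a b c) :
    ∃ a' b' c', PrimitiveQuarticDiffSq a' b' c' ∧ a'.natAbs < a.natAbs := by
  have ⟨hab, _, _, habc⟩ := h
  rcases Int.even_or_odd c with hc | hc
  · rcases Int.even_or_odd b with hb | hb
    · have ha : Even a := (Int.even_pow' four_ne_zero).mp <| by
        rw [show a ^ 4 = b ^ 4 + c ^ 2 by linear_combination habc]
        exact (hb.pow_of_ne_zero four_ne_zero).add (hc.pow_of_ne_zero two_ne_zero)
      have := hab.isUnit_of_dvd' (even_iff_two_dvd.mp ha) (even_iff_two_dvd.mp hb)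
      norm_num [Int.isUnit_iff] at this
    · exact h.exists_natAbs_lt_of_odd_left hb
  · exact h.exists_natAbs_lt_of_odd_right hc

end PrimitiveQuarticDiffSq

theorem not_primitiveQuarticDiffSq (a b c : ℤ) : ¬PrimitiveQuarticDiffSq a b c := by
  induction hn : a.natAbs using Nat.strong_induction_on generalizing a b c with
  | _ n ih =>
    intro h
    obtain ⟨a', b', c', h', hlt⟩ := h.exists_natAbs_lt
    exact ih _ (hn ▸ hlt) a' b' c' rfl h'

theorem Int.eq_zero_of_fourth_pow_sub_fourth_pow_eq_sq {a b c : ℤ} (hb : b ≠ 0)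
    (h : a ^ 4 - b ^ 4 = c ^ 2) : c = 0 := by
  by_contra hc
  obtain ⟨g, a', b', hg, hgcd, rfl, rfl⟩ := Int.exists_gcd_one' (Int.gcd_pos_of_ne_zero_right a hb)
  obtain ⟨c', rfl⟩ : (g : ℤ) ^ 2 ∣ c :=
    (Int.pow_dvd_pow_iff two_ne_zero).mp ⟨a' ^ 4 - b' ^ 4, by rw [← h]; ring⟩
  have hg4 : (g : ℤ) ^ 4 ≠ 0 := by positivity
  refine not_primitiveQuarticDiffSq a' b' c' ⟨Int.isCoprime_iff_gcd_eq_one.mpr hgcd,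
    by rintro rfl; simp at hb, by rintro rfl; simp at hc, mul_left_cancel₀ hg4 ?_⟩
  linear_combination h

theorem Rat.eq_zero_of_fourth_pow_sub_fourth_pow_eq_sq {a b c : ℚ} (hb : b ≠ 0)
    (h : a ^ 4 - b ^ 4 = c ^ 2) : c = 0 := by
  have key : ((a.num * b.den * c.den : ℤ) : ℚ) ^ 4 - ((b.num * a.den * c.den : ℤ) : ℚ) ^ 4
      = ((c.num * c.den * (a.den * b.den) ^ 2 : ℤ) : ℚ) ^ 2 := by
    push_cast
    rw [← Rat.mul_den_eq_num a, ← Rat.mul_den_eq_num b, ← Rat.mul_den_eq_num c]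
    linear_combination ((a.den : ℚ) * b.den * c.den) ^ 4 * h
  have := Int.eq_zero_of_fourth_pow_sub_fourth_pow_eq_sq (b := b.num * a.den * c.den)
    (by simpa using hb) (by exact_mod_cast key)
  simpa using this

lemma E'_equation_iff {x y : ℚ} : E'.Equation x y ↔ y ^ 2 = x ^ 3 + 4 * x := by
  unfold E'; rw [equation_iff]; simp

lemma E'_negY (x y : ℚ) : E'.negY x y = -y := by
  unfold E'; simp [negY]

lemma nonsingular_zero_zero : E'.Nonsingular 0 0 := by
  rw [nonsingular_iff, equation_iff]; norm_num [E']

lemma two_nsmul_P24 : 2 • P24 = .some _ _ nonsingular_zero_zero := by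
  have hy : (4 : ℚ) ≠ E'.negY 2 4 := by rw [E'_negY]; norm_num
  have hslope : E'.slope 2 2 4 4 = 2 := by
    rw [slope_of_Y_ne rfl hy]; norm_num [E'_negY, E']
  rw [two_nsmul, P24, Point.add_self_of_Y_ne hy, Point.some.injEq]
  constructor
  · norm_num [addX, hslope, E']
  · norm_num [addY, negAddY, addX, hslope, E'_negY, E']

lemma four_nsmul_P24 : 4 • P24 = 0 := by
  rw [show 4 = 2 * 2 from rfl, mul_nsmul, two_nsmul_P24, two_nsmul]
  exact Point.add_self_of_Y_eq (by rw [E'_negY]; norm_num)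

lemma addOrderOf_P24 : addOrderOf P24 = 4 := by
  have := Fact.mk Nat.prime_two
  have h := addOrderOf_eq_prime_pow (p := 2) (n := 1) (x := P24)
    (by rw [pow_one, two_nsmul_P24]; exact Point.some_ne_zero _) four_nsmul_P24
  simpa using h

lemma E'_equation_cases {x y : ℚ} (h : E'.Equation x y) :
    x = 0 ∧ y = 0 ∨ x = 2 ∧ (y = 4 ∨ y = -4) := by
  rw [E'_equation_iff] at h
  rcases eq_or_ne x 0 with rfl | hx
  · left; simpa using h
  right
  have key : (y / x) ^ 4 - 2 ^ 4 = (x - 4 / x) ^ 2 := by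
    field_simp
    linear_combination (y ^ 2 + x ^ 3 + 4 * x) * h
  have hx2 : x ^ 2 = 2 ^ 2 := by
    have := Rat.eq_zero_of_fourth_pow_sub_fourth_pow_eq_sq two_ne_zero key
    field_simp at this
    linear_combination this
  rcases sq_eq_sq_iff_eq_or_eq_neg.mp hx2 with rfl | rfl
  · have hy : y ^ 2 = 4 ^ 2 := by linear_combination h
    exact ⟨rfl, sq_eq_sq_iff_eq_or_eq_neg.mp hy⟩
  · nlinarith [sq_nonneg y]

/-- the Mordell–Weil group `E'(ℚ)` of `y² = x³ + 4x` has rank `0` and torsion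
cyclic of order `4` generated by `(2, 4)`; equivalently, `E'(ℚ)` is cyclic of order `4`
generated by `(2, 4)`. -/
theorem mordell_weil_of_x_cubed_plus_four_x :
    addOrderOf P24 = 4 ∧ ∀ P : E'.Point, ∃ n : ℤ, P = n • P24 := by
  refine ⟨addOrderOf_P24, ?_⟩
  rintro (_ | ⟨x, y, h⟩)
  · exact ⟨0, (zero_zsmul _).symm⟩
  rcases E'_equation_cases h.1 with ⟨rfl, rfl⟩ | ⟨rfl, rfl | rfl⟩
  · exact ⟨2, by rw [two_zsmul, ← two_nsmul, two_nsmul_P24]⟩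
  · exact ⟨1, (one_zsmul _).symm⟩
  · refine ⟨-1, ?_⟩
    rw [neg_one_zsmul, P24, Point.neg_some, Point.some.injEq, E'_negY]
    norm_num
end

section
/- Let E: y² = x³ − x, let n = p₀p₁⋯p_k be a product of distinct odd primes, and let H₀⁺ = ℚ(√p₀, …, √p_k). Then the intersection of the 2-power torsion of E with E(H₀⁺) equals E[2]; that is, E(H₀⁺) contains no point of exact order 4. -/
/-!
If `Q` has exact order `4` on `y² = x³ - x`, then `2Q = (e, 0)` with `e³ = e`, and the doubling
formula `(2y)² · x(2Q) = (x² + 1)²` turns `e = 0, 1, -1` into `x² = -1`, `(x - 1)² = 2`,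
`(x + 1)² = 2` respectively. So the coordinate field contains `i` or `√2`. A real field does not
contain `i`, and `√2 ∉ ℚ(√n₀, …, √n_k)` for odd `n_j` by induction on the generators: writing
`√d = a + b√n` over the smaller field, either `√n`, `√d` or `√(dn)` already lies there, while the
`2`-adic valuation of `d` (resp. `dn`) stays odd.
-/

open WeierstrassCurve WeierstrassCurve.Affine

open IntermediateField

open Polynomial in
theorem IntermediateField.exists_eq_add_mul_of_mem_adjoin_simple {F L : Type*} [Field F] [Field L]
    [Algebra F L] {α : L} {c : F} (hα : α ^ 2 = algebraMap F L c) {x : L} (hx : x ∈ F⟮α⟯) :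
    ∃ a b : F, x = algebraMap F L a + algebraMap F L b * α := by
  set m : F[X] := X ^ 2 - C c
  have hm : m.Monic := monic_X_pow_sub_C c two_ne_zero
  have hroot : aeval α m = 0 := by simp [m, hα]
  rw [← mem_toSubalgebra, adjoin_simple_toSubalgebra_of_isAlgebraic ⟨m, hm.ne_zero, hroot⟩,
    Algebra.adjoin_singleton_eq_range_aeval] at hx
  obtain ⟨q, rfl⟩ := hx
  have hdeg : (q %ₘ m).natDegree ≤ 1 := by
    have hm1 : m ≠ 1 := fun h => by simpa [m] using congrArg natDegree h
    simpa [m] using natDegree_modByMonic_lt q hm hm1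
  obtain ⟨b, a, hab⟩ := exists_eq_X_add_C_of_natDegree_le_one hdeg
  refine ⟨a, b, ?_⟩
  rw [AlgHom.toRingHom_eq_coe, RingHom.coe_coe, ← aeval_modByMonic_eq_self_of_root hroot, hab]
  simp [add_comm]

theorem even_padicValNat_of_isSquare {r d : ℕ} [Fact r.Prime] (hd : IsSquare d) :
    Even (padicValNat r d) := by
  obtain ⟨m, rfl⟩ := hd
  rcases eq_or_ne m 0 with rfl | hm
  · simp
  · exact (padicValNat.mul (p := r) hm hm).symm ▸ ⟨_, rfl⟩

theorem Real.sqrt_natCast_notMem_adjoin_simple_sqrt {A : IntermediateField ℚ ℝ} {r m : ℕ}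
    [Fact r.Prime] (hrm : ¬ r ∣ m) (hA : ∀ {d : ℕ}, Odd (padicValNat r d) → √(d : ℝ) ∉ A)
    {d : ℕ} (hd : Odd (padicValNat r d)) : √(d : ℝ) ∉ A⟮√(m : ℝ)⟯ := by
  intro hmem
  have hsq : √(m : ℝ) ^ 2 = m := Real.sq_sqrt (Nat.cast_nonneg _)
  obtain ⟨a, b, hab⟩ :=
    exists_eq_add_mul_of_mem_adjoin_simple (c := (m : A)) (by rwa [map_natCast]) hmem
  simp only [IntermediateField.algebraMap_apply] at hab
  by_cases hmA : √(m : ℝ) ∈ A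
  · exact hA hd (hab ▸ add_mem a.2 (mul_mem b.2 hmA))
  have hsqd : (d : ℝ) = a ^ 2 + b ^ 2 * m + 2 * a * b * √(m : ℝ) := by
    rw [← Real.sq_sqrt (Nat.cast_nonneg d), hab]
    linear_combination (b : ℝ) ^ 2 * hsq
  have hab0 : a * b = 0 := by
    by_contra h
    apply hmA
    have hsqrt_eq : √(m : ℝ) = ((d - a ^ 2 - b ^ 2 * m) / (2 * a * b) : A) := by
      have h2ab : ((2 * a * b : A) : ℝ) ≠ 0 := by
        norm_cast
        simpa [mul_assoc] using h
      rw [IntermediateField.coe_div, eq_div_iff h2ab]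
      push_cast [show ((2 : A) : ℝ) = 2 from rfl]
      linear_combination -hsqd
    exact hsqrt_eq ▸ SetLike.coe_mem _
  rcases mul_eq_zero.mp hab0 with rfl | rfl
  · have hval : padicValNat r (d * m) = padicValNat r d := by
      have hd0 : d ≠ 0 := by rintro rfl; simp at hd
      have hm0 : m ≠ 0 := by rintro rfl; exact hrm (dvd_zero r)
      rw [padicValNat.mul hd0 hm0, padicValNat.eq_zero_of_not_dvd hrm, add_zero]
    have hdm : √((d * m : ℕ) : ℝ) = b * m := by
      rw [Nat.cast_mul, Real.sqrt_mul (Nat.cast_nonneg _), hab, ZeroMemClass.coe_zero, zero_add,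
        mul_assoc, Real.mul_self_sqrt (Nat.cast_nonneg _)]
    exact hA (hval ▸ hd) (hdm ▸ mul_mem b.2 (IntermediateField.natCast_mem A _))
  · exact hA hd (by simp [hab])

theorem Real.sqrt_natCast_notMem_adjoin_sqrt {ι : Type*} (n : ι → ℕ) (s : Finset ι) {r : ℕ}
    [Fact r.Prime] (hs : ∀ i ∈ s, ¬ r ∣ n i) {d : ℕ} (hd : Odd (padicValNat r d)) :
    √(d : ℝ) ∉ adjoin ℚ ((fun i => √(n i : ℝ)) '' s) := by
  classical
  induction s using Finset.induction_on generalizing d with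
  | empty =>
    rw [Finset.coe_empty, Set.image_empty, adjoin_empty, mem_bot]
    rintro ⟨q, hq⟩
    refine Nat.not_even_iff_odd.mpr hd (even_padicValNat_of_isSquare ?_)
    exact irrational_sqrt_natCast_iff.not_left.mp (hq ▸ Rat.not_irrational q)
  | @insert i t _ ih =>
    rw [Finset.coe_insert, Set.image_insert_eq, Set.insert_eq, Set.union_comm,
      ← adjoin_adjoin_left, mem_restrictScalars]
    exact sqrt_natCast_notMem_adjoin_simple_sqrt (hs i (Finset.mem_insert_self i t))
      (ih fun j hj => hs j (Finset.mem_insert_of_mem hj)) hd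

theorem exists_pow_nsmul_eq_zero_iff {G : Type*} [AddMonoid G] {n : ℕ}
    (h : ∀ Q : G, n • n • Q = 0 → n • Q = 0) (P : G) : (∃ j, n ^ j • P = 0) ↔ n • P = 0 := by
  refine ⟨?_, fun hP => ⟨1, by rwa [pow_one]⟩⟩
  rintro ⟨j, hj⟩
  induction j generalizing P with
  | zero => rw [pow_zero, one_smul] at hj; rw [hj, smul_zero]
  | succ j ih => exact h P (ih (n • P) (by rwa [pow_succ, mul_nsmul'] at hj))

theorem WeierstrassCurve.Affine.Point.two_nsmul_some_eq_zero_iff {F : Type*} [Field F]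
    [DecidableEq F] {W : Affine F} {x y : F} (h : W.Nonsingular x y) :
    2 • Point.some x y h = 0 ↔ y = W.negY x y := by
  rw [two_nsmul]
  refine ⟨fun h2 => ?_, Point.add_self_of_Y_eq⟩
  by_contra hy
  exact Point.some_ne_zero _ (Point.add_self_of_Y_ne hy ▸ h2)

-- `(x, y)` is a point of `y² = x³ - x` whose double is the `2`-torsion point `(e, 0)`.
theorem isSquare_neg_one_or_isSquare_two_of_doubling_eq {R : Type*} [CommRing R] [NoZeroDivisors R]
    {x y e : R} (hxy : y ^ 2 = x ^ 3 - x) (he : e ^ 3 = e)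
    (hdbl : (2 * y) ^ 2 * e = (x ^ 2 + 1) ^ 2) : IsSquare (-1 : R) ∨ IsSquare (2 : R) := by
  have : e * (e - 1) * (e + 1) = 0 := by linear_combination he
  rcases mul_eq_zero.mp this with h | h
  · rcases mul_eq_zero.mp h with h | h
    · left
      have : (x ^ 2 + 1) ^ 2 = 0 := by linear_combination -hdbl + (2 * y) ^ 2 * h
      exact ⟨x, by linear_combination -eq_zero_of_pow_eq_zero this⟩
    · right
      have : ((x - 1) ^ 2 - 2) ^ 2 = 0 := by
        linear_combination -hdbl + (2 * y) ^ 2 * h + (4 : R) * hxy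
      exact ⟨x - 1, by linear_combination -eq_zero_of_pow_eq_zero this⟩
  · right
    have : ((x + 1) ^ 2 - 2) ^ 2 = 0 := by
      linear_combination -hdbl + (2 * y) ^ 2 * h - (4 : R) * hxy
    exact ⟨x + 1, by linear_combination -eq_zero_of_pow_eq_zero this⟩

section
variable {K : Type*} [Field K] [Algebra ℚ K]

theorem E_negY (x y : K) : (E.baseChange K).negY x y = -y := by
  simp [E, WeierstrassCurve.baseChange]

theorem E_equation_iff (x y : K) : (E.baseChange K).Equation x y ↔ y ^ 2 = x ^ 3 - x := by
  simp [equation_iff, E, WeierstrassCurve.baseChange, sub_eq_add_neg]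

variable [DecidableEq K]

theorem E_two_nsmul_some_eq_zero_iff {x y : K} (h : (E.baseChange K).Nonsingular x y) :
    2 • Point.some x y h = 0 ↔ y = 0 := by
  have := charZero_of_injective_algebraMap (algebraMap ℚ K).injective
  rw [Point.two_nsmul_some_eq_zero_iff, E_negY, CharZero.eq_neg_self_iff]

theorem E_exists_two_nsmul_some_eq_some {x y : K} (h : (E.baseChange K).Nonsingular x y)
    (hy : y ≠ 0) :
    ∃ x₂ y₂ h₂,
      2 • Point.some x y h = Point.some x₂ y₂ h₂ ∧ (2 * y) ^ 2 * x₂ = (x ^ 2 + 1) ^ 2 := by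
  have := charZero_of_injective_algebraMap (algebraMap ℚ K).injective
  have hy' : y ≠ (E.baseChange K).negY x y := by rwa [E_negY, Ne, CharZero.eq_neg_self_iff]
  refine ⟨_, _, _, by rw [two_nsmul, Point.add_self_of_Y_ne hy'], ?_⟩
  rw [slope_of_Y_ne rfl hy', E_negY]
  simp only [addX, E, WeierstrassCurve.baseChange, map_a₁, map_a₂, map_a₄, eq_ratCast,
    Rat.cast_zero, Rat.cast_neg, Rat.cast_one, mul_zero, zero_mul, add_zero, sub_zero,
    sub_neg_eq_add]
  have h2y : 2 * y ≠ 0 := mul_ne_zero two_ne_zero hy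
  rw [← two_mul, mul_sub, mul_sub, ← mul_pow, mul_div_cancel₀ _ h2y]
  linear_combination (-8 * x) * (E_equation_iff x y).mp h.1

theorem E_two_nsmul_eq_zero_of_two_nsmul_two_nsmul_eq_zero (h2 : ¬IsSquare (2 : K))
    (h1 : ¬IsSquare (-1 : K)) (Q : (E.baseChange K).Point) (hQ : 2 • 2 • Q = 0) : 2 • Q = 0 := by
  rcases Q with _ | ⟨x, y, h⟩
  · exact smul_zero 2
  by_cases hy : y = 0
  · exact (E_two_nsmul_some_eq_zero_iff h).mpr hy
  obtain ⟨x₂, y₂, h₂, hQ₂, hdbl⟩ := E_exists_two_nsmul_some_eq_some h hy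
  rw [hQ₂, E_two_nsmul_some_eq_zero_iff] at hQ
  have he : x₂ ^ 3 = x₂ := by
    linear_combination -(E_equation_iff x₂ y₂).mp h₂.1 + y₂ * hQ
  rcases isSquare_neg_one_or_isSquare_two_of_doubling_eq ((E_equation_iff x y).mp h.1) he hdbl
    with h | h
  exacts [(h1 h).elim, (h2 h).elim]

end

theorem two_power_torsion_of_real_multiquadratic_general
    (k : ℕ) (p : Fin (k + 1) → ℕ) (hodd : ∀ i, Odd (p i))
    (F : IntermediateField ℚ ℝ)
    (hF : F = IntermediateField.adjoin ℚ (Set.range fun i => Real.sqrt (p i))) :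
    ∀ P : WeierstrassCurve.Affine.Point (WeierstrassCurve.Affine.baseChange E ↥F), (∃ j : ℕ, 2 ^ j • P = 0) ↔ 2 • P = 0 := by
  have hsqrt2 : √(2 : ℝ) ∉ F := by
    have := Real.sqrt_natCast_notMem_adjoin_sqrt p Finset.univ (r := 2) (d := 2)
      (fun i _ => (hodd i).not_two_dvd_nat) (by simp)
    simpa [hF] using this
  have h2 : ¬IsSquare (2 : F) := by
    rintro ⟨u, hu⟩
    have hsqrt : √(2 : ℝ) = |(u : ℝ)| := by
      rw [← Real.sqrt_mul_self_eq_abs]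
      exact_mod_cast congrArg (fun v : F => √(v : ℝ)) hu
    apply hsqrt2
    rcases abs_choice (u : ℝ) with h | h <;> rw [hsqrt, h]
    exacts [u.2, neg_mem u.2]
  have h1 : ¬IsSquare (-1 : F) := by
    rintro ⟨u, hu⟩
    have : (u : ℝ) * u = -1 := by exact_mod_cast hu.symm
    nlinarith [mul_self_nonneg (u : ℝ)]
  exact exists_pow_nsmul_eq_zero_iff (E_two_nsmul_eq_zero_of_two_nsmul_two_nsmul_eq_zero h2 h1)

/-- for distinct odd primes `p₀, …, p_k` and the real multiquadratic field
`H₀⁺ = ℚ(√p₀, …, √p_k)`, the `2`-power torsion of `E(H₀⁺)` is exactly `E[2]`;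
that is, `E(H₀⁺)` contains no point of exact order `4`. -/
theorem two_power_torsion_of_real_multiquadratic
    (k : ℕ) (p : Fin (k + 1) → ℕ) (hp : ∀ i, (p i).Prime) (hodd : ∀ i, Odd (p i))
    (hinj : Function.Injective p)
    (F : IntermediateField ℚ ℝ)
    (hF : F = IntermediateField.adjoin ℚ (Set.range fun i => Real.sqrt (p i))) :
    ∀ P : WeierstrassCurve.Affine.Point (WeierstrassCurve.Affine.baseChange E ↥F), (∃ j : ℕ, 2 ^ j • P = 0) ↔ 2 • P = 0 :=
  two_power_torsion_of_real_multiquadratic_general k p hodd F hF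
end
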